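/- arXiv:2407.03478 — 8 statements merged into one kernel-verified Lean document; each statement's English description precedes it below -/
import Mathlib

section
/- Let (γ,κ) ∈ 𝔈 and let ξ = (ξ₁,ξ₂) ∈ ℝ² with ξ ≠ 0. Then the system of equations 1 − κ/γ + 16π²μ|ξ|² = 0 and |ξ|² − γ²ξ₁² + 4π²σ|ξ|⁴ = 0 holds if and only if ξ₁² = ρ(γ,κ)²χ(γ,κ)² and ξ₂² = ρ(γ,κ)²(1 − χ(γ,κ)²), where ρ and χ are as defined. -/
noncomputable def rho (μ γ κ : ℝ) : ℝ :=
  Real.sqrt ((κ / γ - 1) / (16 * Real.pi ^ 2 * μ))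

noncomputable def chi (μ σ γ κ : ℝ) : ℝ :=
  (1 / γ) * Real.sqrt (1 + σ / (4 * μ) * (κ / γ - 1))

/-- For (γ,κ) ∈ 𝔈 and ξ ≠ 0, the system 1 − κ/γ + 16π²μ|ξ|² = 0 and
|ξ|² − γ²ξ₁² + 4π²σ|ξ|⁴ = 0 holds iff ξ₁² = ρ²χ² and ξ₂² = ρ²(1 − χ²). -/
theorem zero_set_characterization (μ σ γ κ : ℝ) (hμ : 0 < μ) (hσ : 0 < σ)
    (hγ : 1 < γ) (hκ : 1 < κ)
    (h1 : 0 < κ - γ) (h2 : κ - γ ≤ 4 * μ / σ * γ * (γ ^ 2 - 1))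
    (ξ : ℝ × ℝ) (hξ : ξ ≠ 0) :
    (1 - κ / γ + 16 * Real.pi ^ 2 * μ * (ξ.1 ^ 2 + ξ.2 ^ 2) = 0 ∧
      (ξ.1 ^ 2 + ξ.2 ^ 2) - γ ^ 2 * ξ.1 ^ 2 +
        4 * Real.pi ^ 2 * σ * (ξ.1 ^ 2 + ξ.2 ^ 2) ^ 2 = 0) ↔
    (ξ.1 ^ 2 = rho μ γ κ ^ 2 * chi μ σ γ κ ^ 2 ∧
      ξ.2 ^ 2 = rho μ γ κ ^ 2 * (1 - chi μ σ γ κ ^ 2)) := by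
  have hπ : (0:ℝ) < Real.pi := Real.pi_pos
  have hγ0 : (0:ℝ) < γ := lt_trans one_pos hγ
  have hA : (0:ℝ) < κ / γ - 1 := by
    rw [sub_pos, lt_div_iff₀ hγ0, one_mul]; linarith
  have hρ2 : rho μ γ κ ^ 2 = (κ / γ - 1) / (16 * Real.pi ^ 2 * μ) := by
    rw [rho, Real.sq_sqrt]
    positivity
  have hχ2 : chi μ σ γ κ ^ 2 = (1 / γ) ^ 2 * (1 + σ / (4 * μ) * (κ / γ - 1)) := by
    rw [chi, mul_pow, Real.sq_sqrt]
    positivity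
  have hπ0 : Real.pi ≠ 0 := ne_of_gt hπ
  have hμ0 : μ ≠ 0 := ne_of_gt hμ
  have hγne : γ ≠ 0 := ne_of_gt hγ0
  constructor
  · rintro ⟨e1, e2⟩
    have hS : ξ.1 ^ 2 + ξ.2 ^ 2 = (κ / γ - 1) / (16 * Real.pi ^ 2 * μ) := by
      linear_combination (norm := (field_simp; ring)) (1 / (16 * Real.pi ^ 2 * μ)) * e1
    have hx1 : ξ.1 ^ 2 = rho μ γ κ ^ 2 * chi μ σ γ κ ^ 2 := by
      rw [hρ2, hχ2]
      linear_combination (norm := (field_simp; ring)) (-(1 / γ ^ 2)) * e2 +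
        ((1 + 4 * Real.pi ^ 2 * σ *
          ((ξ.1 ^ 2 + ξ.2 ^ 2) + (κ / γ - 1) / (16 * Real.pi ^ 2 * μ))) / γ ^ 2) * hS
    have hSρ : ξ.1 ^ 2 + ξ.2 ^ 2 = rho μ γ κ ^ 2 := by rw [hρ2]; exact hS
    exact ⟨hx1, by linear_combination hSρ - hx1⟩
  · rintro ⟨e1, e2⟩
    have e1' : ξ.1 ^ 2 = (κ / γ - 1) / (16 * Real.pi ^ 2 * μ) *
        ((1 / γ) ^ 2 * (1 + σ / (4 * μ) * (κ / γ - 1))) := by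
      rw [e1, hρ2, hχ2]
    have hs : ξ.1 ^ 2 + ξ.2 ^ 2 = (κ / γ - 1) / (16 * Real.pi ^ 2 * μ) := by
      rw [e1, e2, ← hρ2]; ring
    refine ⟨by linear_combination (norm := (field_simp; ring)) (16 * Real.pi ^ 2 * μ) * hs, ?_⟩
    linear_combination (norm := (field_simp; ring)) (1 + 4 * Real.pi ^ 2 * σ *
        ((ξ.1 ^ 2 + ξ.2 ^ 2) + (κ / γ - 1) / (16 * Real.pi ^ 2 * μ))) * hs +
      (-(γ ^ 2)) * e1'
end

section
/- Let γ, κ ∈ ℝ with γκ ≤ 0 (i.e. γ = 0, or κ = 0, or γ and κ have opposite signs). Then there is no ξ ∈ ℝ² \ {0} satisfying both γ − κ + 16π²μγ|ξ|² = 0 and |ξ|² − γ²ξ₁² + 4π²σ|ξ|⁴ = 0. -/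
/-- If γκ ≤ 0, there is no nonzero ξ ∈ ℝ² satisfying both
γ − κ + 16π²μγ|ξ|² = 0 and |ξ|² − γ²ξ₁² + 4π²σ|ξ|⁴ = 0. -/
theorem no_zeros_opposite_signs (μ σ γ κ : ℝ) (hμ : 0 < μ) (hσ : 0 < σ)
    (hsign : γ * κ ≤ 0) :
    ¬ ∃ ξ : ℝ × ℝ, ξ ≠ 0 ∧
      γ - κ + 16 * Real.pi ^ 2 * μ * γ * (ξ.1 ^ 2 + ξ.2 ^ 2) = 0 ∧
      (ξ.1 ^ 2 + ξ.2 ^ 2) - γ ^ 2 * ξ.1 ^ 2 +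
        4 * Real.pi ^ 2 * σ * (ξ.1 ^ 2 + ξ.2 ^ 2) ^ 2 = 0 := by
  rintro ⟨ξ, hne, h1, h2⟩
  have hr : 0 < ξ.1 ^ 2 + ξ.2 ^ 2 := by
    rcases (show ξ.1 ≠ 0 ∨ ξ.2 ≠ 0 by
      by_contra h; push_neg at h; exact hne (Prod.ext h.1 h.2)) with h | h
    · nlinarith [sq_nonneg ξ.2, pow_two_pos_of_ne_zero h]
    · nlinarith [sq_nonneg ξ.1, pow_two_pos_of_ne_zero h]
  have hπ := Real.pi_pos
  -- γ² ξ₁² = r + 4π²σ r² > 0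
  have hg2 : 0 < γ ^ 2 * ξ.1 ^ 2 := by nlinarith [mul_pos (pow_pos hπ 2) (mul_pos hσ (pow_pos hr 2))]
  have hg : 0 < γ ^ 2 := by nlinarith [sq_nonneg ξ.1, sq_nonneg γ]
  -- κ = γ (1 + 16π²μ r), so γκ = γ²(1+16π²μ r) > 0
  have hk : γ * κ = γ ^ 2 * (1 + 16 * Real.pi ^ 2 * μ * (ξ.1 ^ 2 + ξ.2 ^ 2)) := by
    have : κ = γ + 16 * Real.pi ^ 2 * μ * γ * (ξ.1 ^ 2 + ξ.2 ^ 2) := by linarith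
    rw [this]; ring
  nlinarith [mul_pos hg (show (0:ℝ) < 1 + 16 * Real.pi ^ 2 * μ * (ξ.1 ^ 2 + ξ.2 ^ 2) by nlinarith [mul_pos (pow_pos hπ 2) (mul_pos hμ hr)])]
end

section
/- Let γ, κ > 0 and suppose there exists ξ ∈ ℝ² \ {0} satisfying γ − κ + 16π²μγ|ξ|² = 0 and |ξ|² − γ²ξ₁² + 4π²σ|ξ|⁴ = 0. Then γ > 1, κ > γ, and κ − γ ≤ (4μ/σ)γ(γ² − 1); that is, (γ,κ) ∈ 𝔈. -/
/-- If γ, κ > 0 and there is a nonzero ξ satisfying the two symbol equations,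
then γ > 1, κ > γ, and κ − γ ≤ (4μ/σ)γ(γ² − 1), i.e. (γ,κ) ∈ 𝔈. -/
theorem zeros_imply_mem_frakE (μ σ γ κ : ℝ) (hμ : 0 < μ) (hσ : 0 < σ)
    (hγ : 0 < γ) (hκ : 0 < κ)
    (h : ∃ ξ : ℝ × ℝ, ξ ≠ 0 ∧
      γ - κ + 16 * Real.pi ^ 2 * μ * γ * (ξ.1 ^ 2 + ξ.2 ^ 2) = 0 ∧
      (ξ.1 ^ 2 + ξ.2 ^ 2) - γ ^ 2 * ξ.1 ^ 2 +
        4 * Real.pi ^ 2 * σ * (ξ.1 ^ 2 + ξ.2 ^ 2) ^ 2 = 0) :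
    1 < γ ∧ γ < κ ∧ κ - γ ≤ 4 * μ / σ * γ * (γ ^ 2 - 1) := by
  obtain ⟨ξ, hne, h1, h2⟩ := h
  have hπ : 0 < Real.pi := Real.pi_pos
  have hs : 0 < ξ.1 ^ 2 + ξ.2 ^ 2 := by
    have h0 : ξ.1 ≠ 0 ∨ ξ.2 ≠ 0 := by
      by_contra hc
      push_neg at hc
      exact hne (Prod.ext hc.1 hc.2)
    rcases h0 with h0 | h0 <;> positivity
  set s := ξ.1 ^ 2 + ξ.2 ^ 2 with hsdef
  have hx1 : 0 < ξ.1 ^ 2 := by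
    nlinarith [mul_pos (mul_pos (mul_pos (by positivity : (0:ℝ) < 4 * Real.pi ^ 2) hσ) hs) hs,
      sq_nonneg γ]
  have hγ2 : 1 < γ ^ 2 := by
    nlinarith [mul_pos (mul_pos (mul_pos (by positivity : (0:ℝ) < 4 * Real.pi ^ 2) hσ) hs) hs,
      sq_nonneg ξ.2, mul_nonneg (sq_nonneg γ) (sq_nonneg ξ.2)]
  have hγ1 : 1 < γ := by nlinarith
  have hκγ : γ < κ := by
    nlinarith [mul_pos (mul_pos (mul_pos (by positivity : (0:ℝ) < 16 * Real.pi ^ 2) hμ) hγ) hs]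
  have key : 4 * Real.pi ^ 2 * σ * s ≤ γ ^ 2 - 1 := by
    have ha : (4 * Real.pi ^ 2 * σ * s) * s ≤ (γ ^ 2 - 1) * s := by
      nlinarith [mul_nonneg (sq_nonneg γ) (sq_nonneg ξ.2)]
    exact le_of_mul_le_mul_right ha hs
  refine ⟨hγ1, hκγ, ?_⟩
  rw [div_mul_eq_mul_div, div_mul_eq_mul_div, le_div_iff₀ hσ]
  nlinarith [mul_le_mul_of_nonneg_left key (le_of_lt (by positivity : (0:ℝ) < 4 * μ * γ))]
end

section
/- Suppose (γ,κ) ∈ 𝔈 and ξ ∈ ℝ² \ {0} satisfies q_{γ,κ}(ξ) = 0. Then |ξ| = ρ(γ,κ) and ξ belongs to the set V(γ,κ) = {ρ(γ,κ)·(σ₁χ(γ,κ), σ₂√(1 − χ(γ,κ)²)) : σ₁,σ₂ ∈ {−1,1}}; conversely every element of V(γ,κ) is a zero of q_{γ,κ}. -/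
/-- The linearized symbol q_{γ,κ}(ξ). -/
noncomputable def qsym (μ σ γ κ : ℝ) (ξ : ℝ × ℝ) : ℂ :=
  Complex.I * ((2 * Real.pi * ξ.1 *
      (γ - κ + 16 * Real.pi ^ 2 * μ * γ * (ξ.1 ^ 2 + ξ.2 ^ 2)) : ℝ) : ℂ) -
  ((4 * Real.pi ^ 2 * ((ξ.1 ^ 2 + ξ.2 ^ 2) - γ ^ 2 * ξ.1 ^ 2 +
      4 * Real.pi ^ 2 * σ * (ξ.1 ^ 2 + ξ.2 ^ 2) ^ 2) : ℝ) : ℂ)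

/-- V(γ,κ) = {ρ(γ,κ)(σ₁χ(γ,κ), σ₂√(1−χ(γ,κ)²)) : σ₁,σ₂ ∈ {−1,1}}. -/
noncomputable def Vset (μ σ γ κ : ℝ) : Set (ℝ × ℝ) :=
  {ξ | ∃ s₁ s₂ : ℝ, (s₁ = 1 ∨ s₁ = -1) ∧ (s₂ = 1 ∨ s₂ = -1) ∧
    ξ = (rho μ γ κ * (s₁ * chi μ σ γ κ),
         rho μ γ κ * (s₂ * Real.sqrt (1 - chi μ σ γ κ ^ 2)))}

lemma qaux (A B : ℝ) : Complex.I * (A:ℂ) - (B:ℂ) = 0 ↔ A = 0 ∧ B = 0 := by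
  constructor
  · intro h
    have hre := congrArg Complex.re h
    have him := congrArg Complex.im h
    simp at hre him
    exact ⟨him, hre⟩
  · rintro ⟨h1, h2⟩; simp [h1, h2]

lemma sign_aux (x c : ℝ) (h : |x| = c) : ∃ s : ℝ, (s = 1 ∨ s = -1) ∧ x = s * c := by
  rcases le_or_gt 0 x with hx | hx
  · exact ⟨1, Or.inl rfl, by rw [← h, abs_of_nonneg hx]; ring⟩
  · exact ⟨-1, Or.inr rfl, by rw [← h, abs_of_neg hx]; ring⟩

set_option maxHeartbeats 1000000 in
/-- For (γ,κ) ∈ 𝔈, every nonzero zero ξ of q_{γ,κ} satisfies |ξ| = ρ(γ,κ) and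
belongs to V(γ,κ); conversely every element of V(γ,κ) is a zero of q_{γ,κ}. -/
theorem qsym_zeros_eq_Vset (μ σ γ κ : ℝ) (hμ : 0 < μ) (hσ : 0 < σ)
    (hγ : 1 < γ) (hκ : 1 < κ)
    (h1 : 0 < κ - γ) (h2 : κ - γ ≤ 4 * μ / σ * γ * (γ ^ 2 - 1)) :
    (∀ ξ : ℝ × ℝ, ξ ≠ 0 → qsym μ σ γ κ ξ = 0 →
      Real.sqrt (ξ.1 ^ 2 + ξ.2 ^ 2) = rho μ γ κ ∧ ξ ∈ Vset μ σ γ κ) ∧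
    (∀ ξ ∈ Vset μ σ γ κ, qsym μ σ γ κ ξ = 0) := by
  have hπ : (0:ℝ) < Real.pi := Real.pi_pos
  have hγ0 : (0:ℝ) < γ := by linarith
  set ρ2 : ℝ := (κ / γ - 1) / (16 * Real.pi ^ 2 * μ) with hρ2
  have hfrac : 0 < κ / γ - 1 := by
    rw [sub_pos, lt_div_iff₀ hγ0]; linarith
  have hρ2pos : 0 < ρ2 := by
    apply div_pos hfrac; positivity
  have hrho_sq : rho μ γ κ ^ 2 = ρ2 := Real.sq_sqrt hρ2pos.le
  have hrho_pos : 0 < rho μ γ κ := Real.sqrt_pos.mpr hρ2pos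
  set X : ℝ := 1 + σ / (4 * μ) * (κ / γ - 1) with hX
  have hXpos : 0 < X := by positivity
  have hchi_sq : chi μ σ γ κ ^ 2 = X / γ ^ 2 := by
    rw [chi, mul_pow, Real.sq_sqrt hXpos.le]; ring
  have hchi_pos : 0 < chi μ σ γ κ := by
    rw [chi]; positivity
  have h2' : σ * (κ - γ) ≤ 4 * μ * γ * (γ ^ 2 - 1) := by
    have h := mul_le_mul_of_nonneg_left h2 hσ.le
    calc σ * (κ - γ) ≤ σ * (4 * μ / σ * γ * (γ ^ 2 - 1)) := h
      _ = 4 * μ * γ * (γ ^ 2 - 1) := by field_simp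
  have hXeq : X * (4 * μ * γ) = 4 * μ * γ + σ * (κ - γ) := by
    rw [hX]; field_simp
  have hXle : X ≤ γ ^ 2 := by
    nlinarith [mul_pos (mul_pos (by linarith : (0:ℝ) < 4*μ) hγ0) hγ0]
  have hchile : chi μ σ γ κ ^ 2 ≤ 1 := by
    rw [hchi_sq, div_le_one (by positivity)]; exact hXle
  have hρ2eq : 16 * Real.pi ^ 2 * μ * γ * ρ2 = κ - γ := by
    rw [hρ2]; field_simp
  have hXρ : X = 1 + 4 * Real.pi ^ 2 * σ * ρ2 := by
    rw [hX, hρ2]; field_simp; ring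
  clear_value ρ2 X
  have hrhochi : (rho μ γ κ * chi μ σ γ κ) ^ 2 = ρ2 * (X / γ ^ 2) := by
    rw [mul_pow, hrho_sq, hchi_sq]
  have hrhos : (rho μ γ κ * Real.sqrt (1 - chi μ σ γ κ ^ 2)) ^ 2
      = ρ2 * (1 - X / γ ^ 2) := by
    rw [mul_pow, hrho_sq, Real.sq_sqrt (by linarith), hchi_sq]
  constructor
  · rintro ⟨a, b⟩ hne hq
    simp only [qsym] at hq
    rw [qaux] at hq
    obtain ⟨hA, hB⟩ := hq
    have hB' : a ^ 2 + b ^ 2 - γ ^ 2 * a ^ 2 +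
        4 * Real.pi ^ 2 * σ * (a ^ 2 + b ^ 2) ^ 2 = 0 := by
      rcases mul_eq_zero.mp hB with h | h
      · exact absurd h (by positivity)
      · exact h
    rcases mul_eq_zero.mp hA with h | hfac
    · -- 2π a = 0, so a = 0
      have ha : a = 0 := by
        rcases mul_eq_zero.mp h with h' | h'
        · exact absurd h' (by positivity)
        · exact h'
      have hb : b ≠ 0 := by
        intro h'
        exact hne (by rw [ha, h']; rfl)
      have hb2 : 0 < b ^ 2 := by positivity
      rw [ha] at hB'
      nlinarith [mul_pos (mul_pos (mul_pos (by positivity : (0:ℝ) < 4 * Real.pi ^ 2) hσ)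
        hb2) hb2]
    · have hc : (0:ℝ) < 16 * Real.pi ^ 2 * μ * γ := by positivity
      have hr : a ^ 2 + b ^ 2 = ρ2 := by
        have h' : 16 * Real.pi ^ 2 * μ * γ * (a ^ 2 + b ^ 2)
            = 16 * Real.pi ^ 2 * μ * γ * ρ2 := by rw [hρ2eq]; linarith
        exact mul_left_cancel₀ hc.ne' h'
      have hsq : Real.sqrt (a ^ 2 + b ^ 2) = rho μ γ κ := by
        rw [hr, rho, ← hρ2]
      refine ⟨hsq, ?_⟩
      rw [hr] at hB'
      have hγa : γ ^ 2 * a ^ 2 = ρ2 * X := by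
        rw [hXρ]; linear_combination -hB'
      have ha2 : a ^ 2 = ρ2 * (X / γ ^ 2) := by
        field_simp
        linear_combination hγa
      have hb2 : b ^ 2 = ρ2 * (1 - X / γ ^ 2) := by
        field_simp
        linear_combination γ ^ 2 * hr - hγa
      have habs : |a| = rho μ γ κ * chi μ σ γ κ := by
        rw [← Real.sqrt_sq_eq_abs, ha2, ← hrhochi,
          Real.sqrt_sq (mul_nonneg hrho_pos.le hchi_pos.le)]
      have hbabs : |b| = rho μ γ κ * Real.sqrt (1 - chi μ σ γ κ ^ 2) := by
        rw [← Real.sqrt_sq_eq_abs, hb2, ← hrhos,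
          Real.sqrt_sq (mul_nonneg hrho_pos.le (Real.sqrt_nonneg _))]
      obtain ⟨s₁, hs₁, ha⟩ := sign_aux a _ habs
      obtain ⟨s₂, hs₂, hb⟩ := sign_aux b _ hbabs
      refine ⟨s₁, s₂, hs₁, hs₂, ?_⟩
      rw [Prod.mk.injEq]
      exact ⟨by linear_combination ha, by linear_combination hb⟩
  · rintro ξ ⟨s₁, s₂, hs₁, hs₂, hξ⟩
    have hs₁sq : s₁ ^ 2 = 1 := by rcases hs₁ with h | h <;> rw [h] <;> norm_num
    have hs₂sq : s₂ ^ 2 = 1 := by rcases hs₂ with h | h <;> rw [h] <;> norm_num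
    subst hξ
    have ha2 : (rho μ γ κ * (s₁ * chi μ σ γ κ)) ^ 2 = ρ2 * (X / γ ^ 2) := by
      rw [show rho μ γ κ * (s₁ * chi μ σ γ κ) = s₁ * (rho μ γ κ * chi μ σ γ κ) by ring,
        mul_pow, hs₁sq, one_mul, hrhochi]
    have hb2 : (rho μ γ κ * (s₂ * Real.sqrt (1 - chi μ σ γ κ ^ 2))) ^ 2
        = ρ2 * (1 - X / γ ^ 2) := by
      rw [show rho μ γ κ * (s₂ * Real.sqrt (1 - chi μ σ γ κ ^ 2))
          = s₂ * (rho μ γ κ * Real.sqrt (1 - chi μ σ γ κ ^ 2)) by ring,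
        mul_pow, hs₂sq, one_mul, hrhos]
    set a := rho μ γ κ * (s₁ * chi μ σ γ κ)
    set b := rho μ γ κ * (s₂ * Real.sqrt (1 - chi μ σ γ κ ^ 2))
    clear_value a b
    have hr : a ^ 2 + b ^ 2 = ρ2 := by rw [ha2, hb2]; ring
    have hA0 : 2 * Real.pi * a *
        (γ - κ + 16 * Real.pi ^ 2 * μ * γ * (a ^ 2 + b ^ 2)) = 0 := by
      rw [hr, hρ2eq]; ring
    have hB0 : 4 * Real.pi ^ 2 * ((a ^ 2 + b ^ 2) - γ ^ 2 * a ^ 2 +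
        4 * Real.pi ^ 2 * σ * (a ^ 2 + b ^ 2) ^ 2) = 0 := by
      have hgb : γ ^ 2 * a ^ 2 = ρ2 * X := by
        rw [ha2]; field_simp
      rw [hr, hgb, hXρ]; ring
      -- γ²a² = ρ2*X = ρ2*(1+4π²σρ2)
    simp only [qsym]
    exact (qaux _ _).mpr ⟨hA0, hB0⟩
end

section
/- The set V(γ,κ) of zeros has cardinality 2 when κ − γ = (4μ/σ)γ(γ²−1) (i.e. when χ(γ,κ) = 1) and cardinality 4 when 0 < κ − γ < (4μ/σ)γ(γ²−1) (i.e. when 0 < χ(γ,κ) < 1). -/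
/-- For (γ,κ) ∈ 𝔈, V(γ,κ) has 2 points when κ − γ = (4μ/σ)γ(γ²−1) and 4 points
when 0 < κ − γ < (4μ/σ)γ(γ²−1). -/
theorem Vset_card (μ σ γ κ : ℝ) (hμ : 0 < μ) (hσ : 0 < σ)
    (hγ : 1 < γ) (hκ : 1 < κ)
    (h1 : 0 < κ - γ) (h2 : κ - γ ≤ 4 * μ / σ * γ * (γ ^ 2 - 1)) :
    (κ - γ = 4 * μ / σ * γ * (γ ^ 2 - 1) → (Vset μ σ γ κ).ncard = 2) ∧
    (κ - γ < 4 * μ / σ * γ * (γ ^ 2 - 1) → (Vset μ σ γ κ).ncard = 4) := by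
  have hγ0 : 0 < γ := by linarith
  have hrat : 0 < κ / γ - 1 := by
    rw [sub_pos, lt_div_iff₀ hγ0]; linarith
  have hπ := Real.pi_pos
  have hrho : 0 < rho μ γ κ := by
    apply Real.sqrt_pos.mpr; positivity
  have hE0 : (0:ℝ) < 1 + σ / (4 * μ) * (κ / γ - 1) := by positivity
  have hchiE : chi μ σ γ κ = Real.sqrt (1 + σ / (4 * μ) * (κ / γ - 1)) / γ := by
    rw [chi]; ring
  have hchi0 : 0 < chi μ σ γ κ := by
    rw [hchiE]; positivity
  have key : (1 + σ / (4 * μ) * (κ / γ - 1)) - γ ^ 2 =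
      (σ / (4 * μ * γ)) * ((κ - γ) - 4 * μ / σ * γ * (γ ^ 2 - 1)) := by
    field_simp; ring
  have hVeq : Vset μ σ γ κ =
      {(rho μ γ κ * chi μ σ γ κ, rho μ γ κ * Real.sqrt (1 - chi μ σ γ κ ^ 2)),
       (rho μ γ κ * chi μ σ γ κ, -(rho μ γ κ * Real.sqrt (1 - chi μ σ γ κ ^ 2))),
       (-(rho μ γ κ * chi μ σ γ κ), rho μ γ κ * Real.sqrt (1 - chi μ σ γ κ ^ 2)),
       (-(rho μ γ κ * chi μ σ γ κ), -(rho μ γ κ * Real.sqrt (1 - chi μ σ γ κ ^ 2)))} := by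
    ext ξ
    simp only [Vset, Set.mem_setOf_eq, Set.mem_insert_iff, Set.mem_singleton_iff]
    constructor
    · rintro ⟨s₁, s₂, (rfl | rfl), (rfl | rfl), rfl⟩ <;>
        simp [Prod.ext_iff] <;> try ring_nf
      all_goals tauto
    · rintro (rfl | rfl | rfl | rfl)
      · exact ⟨1, 1, Or.inl rfl, Or.inl rfl, by norm_num⟩
      · exact ⟨1, -1, Or.inl rfl, Or.inr rfl, by norm_num⟩
      · exact ⟨-1, 1, Or.inr rfl, Or.inl rfl, by norm_num⟩
      · exact ⟨-1, -1, Or.inr rfl, Or.inr rfl, by norm_num⟩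
  constructor
  · intro heq
    have hEγ : 1 + σ / (4 * μ) * (κ / γ - 1) = γ ^ 2 := by
      have h0 : (1 + σ / (4 * μ) * (κ / γ - 1)) - γ ^ 2 = 0 := by
        rw [key, heq]; ring
      linarith
    have hc1 : chi μ σ γ κ = 1 := by
      rw [hchiE, hEγ, Real.sqrt_sq hγ0.le, div_self hγ0.ne']
    have hb0 : Real.sqrt (1 - chi μ σ γ κ ^ 2) = 0 := by
      rw [hc1]; norm_num
    rw [hVeq, hb0, hc1]
    simp only [mul_one, mul_zero, neg_zero]
    rw [show ({(rho μ γ κ, (0:ℝ)), (rho μ γ κ, 0), (-rho μ γ κ, 0), (-rho μ γ κ, 0)} :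
          Set (ℝ × ℝ)) = {(rho μ γ κ, 0), (-rho μ γ κ, 0)} by
      simp [Set.insert_comm]]
    rw [Set.ncard_pair]
    intro h
    rw [Prod.mk.injEq] at h
    linarith [h.1]
  · intro hlt
    have hEγ : 1 + σ / (4 * μ) * (κ / γ - 1) < γ ^ 2 := by
      have h4 : 0 < σ / (4 * μ * γ) := by positivity
      have : (1 + σ / (4 * μ) * (κ / γ - 1)) - γ ^ 2 < 0 := by
        rw [key]; exact mul_neg_of_pos_of_neg h4 (by linarith)
      linarith
    have hc1 : chi μ σ γ κ < 1 := by
      rw [hchiE, div_lt_one hγ0]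
      calc Real.sqrt (1 + σ / (4 * μ) * (κ / γ - 1)) < Real.sqrt (γ ^ 2) :=
            Real.sqrt_lt_sqrt hE0.le hEγ
        _ = γ := Real.sqrt_sq hγ0.le
    have hb0 : 0 < Real.sqrt (1 - chi μ σ γ κ ^ 2) := by
      apply Real.sqrt_pos.mpr; nlinarith
    have hac : 0 < rho μ γ κ * chi μ σ γ κ := mul_pos hrho hchi0
    have hab : 0 < rho μ γ κ * Real.sqrt (1 - chi μ σ γ κ ^ 2) := mul_pos hrho hb0
    rw [hVeq]
    generalize hp : rho μ γ κ * chi μ σ γ κ = p at hac ⊢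
    generalize hq : rho μ γ κ * Real.sqrt (1 - chi μ σ γ κ ^ 2) = q at hab ⊢
    have h₁ : ((p, q) : ℝ × ℝ) ∉ ({(p, -q), (-p, q), (-p, -q)} : Set (ℝ × ℝ)) := by
      simp only [Set.mem_insert_iff, Set.mem_singleton_iff, Prod.mk.injEq, not_or]
      refine ⟨?_, ?_, ?_⟩ <;> rintro ⟨h, h'⟩ <;> linarith
    have h₂ : ((p, -q) : ℝ × ℝ) ∉ ({(-p, q), (-p, -q)} : Set (ℝ × ℝ)) := by
      simp only [Set.mem_insert_iff, Set.mem_singleton_iff, Prod.mk.injEq, not_or]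
      refine ⟨?_, ?_⟩ <;> rintro ⟨h, h'⟩ <;> linarith
    have h₃ : ((-p, q) : ℝ × ℝ) ∉ ({(-p, -q)} : Set (ℝ × ℝ)) := by
      simp only [Set.mem_singleton_iff, Prod.mk.injEq, not_and]
      intro _ h; linarith
    rw [Set.ncard_insert_of_notMem h₁, Set.ncard_insert_of_notMem h₂,
        Set.ncard_insert_of_notMem h₃, Set.ncard_singleton]
end

section
/- Let (γ,κ) ∈ 𝔈 and L = 𝔩(γ,κ), where 𝔩(γ,κ) = (1/ρ(γ,κ))·(1,1) if κ−γ = (4μ/σ)γ(γ²−1), and 𝔩(γ,κ) = (1/ρ(γ,κ))·(1/χ(γ,κ), 1/√(1−χ(γ,κ)²)) otherwise. Then every point of V(γ,κ) lies on the lattice (ℤ/L₁) × (ℤ/L₂) and is nonzero; in fact each point of V(γ,κ) has coordinates (±1/L₁, 0) in the first case and (±1/L₁, ±1/L₂) in the second case. -/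
open scoped Classical

/-- The period lengths 𝔩(γ,κ). -/
noncomputable def ellL (μ σ γ κ : ℝ) : ℝ × ℝ :=
  if κ - γ = 4 * μ / σ * γ * (γ ^ 2 - 1) then
    (1 / rho μ γ κ, 1 / rho μ γ κ)
  else
    (1 / (rho μ γ κ * chi μ σ γ κ),
     1 / (rho μ γ κ * Real.sqrt (1 - chi μ σ γ κ ^ 2)))

/-- For (γ,κ) ∈ 𝔈 and L = 𝔩(γ,κ), every point of V(γ,κ) is nonzero and lies on the
lattice (ℤ/L₁)×(ℤ/L₂); in fact it has coordinates (±1/L₁, 0) in the border case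
κ − γ = (4μ/σ)γ(γ²−1) and (±1/L₁, ±1/L₂) otherwise. -/
theorem Vset_on_lattice (μ σ γ κ : ℝ) (hμ : 0 < μ) (hσ : 0 < σ)
    (hγ : 1 < γ) (hκ : 1 < κ)
    (h1 : 0 < κ - γ) (h2 : κ - γ ≤ 4 * μ / σ * γ * (γ ^ 2 - 1)) :
    ∀ ξ ∈ Vset μ σ γ κ, ξ ≠ 0 ∧
      ∃ m n : ℤ, ξ = ((m : ℝ) / (ellL μ σ γ κ).1, (n : ℝ) / (ellL μ σ γ κ).2) ∧
        ((κ - γ = 4 * μ / σ * γ * (γ ^ 2 - 1) → (m = 1 ∨ m = -1) ∧ n = 0) ∧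
         (κ - γ ≠ 4 * μ / σ * γ * (γ ^ 2 - 1) →
            (m = 1 ∨ m = -1) ∧ (n = 1 ∨ n = -1))) := by
  intro ξ hξ
  obtain ⟨s₁, s₂, hs₁, hs₂, hξeq⟩ := hξ
  have hγ0 : (0:ℝ) < γ := lt_trans one_pos hγ
  have ha : 0 < κ/γ - 1 := by
    rw [sub_pos, lt_div_iff₀ hγ0, one_mul]; linarith
  have hρ : 0 < rho μ γ κ := Real.sqrt_pos.2 (by positivity)
  set t : ℝ := 1 + σ/(4*μ)*(κ/γ-1) with ht
  clear_value t
  have ht0 : 0 < t := by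
    have h' : 0 < σ/(4*μ)*(κ/γ-1) := mul_pos (by positivity) ha
    rw [ht]; linarith
  have hchidef : chi μ σ γ κ = Real.sqrt t / γ := by
    rw [chi, ht]; ring
  have hchi0 : 0 < chi μ σ γ κ := by
    rw [hchidef]; exact div_pos (Real.sqrt_pos.2 ht0) hγ0
  have hchisq : chi μ σ γ κ ^ 2 = t / γ^2 := by
    rw [hchidef, div_pow, Real.sq_sqrt ht0.le]
  have key : t - γ^2 = σ/(4*μ*γ) * ((κ-γ) - 4*μ/σ*γ*(γ^2-1)) := by
    rw [ht]
    field_simp [hμ.ne', hσ.ne', hγ0.ne']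
    ring
  by_cases hcase : κ - γ = 4*μ/σ*γ*(γ^2-1)
  · -- border case
    have htγ : t = γ^2 := by
      have h0 : t - γ^2 = 0 := by rw [key, hcase]; ring
      linarith
    have hchi1 : chi μ σ γ κ = 1 := by
      rw [hchidef, htγ, Real.sqrt_sq hγ0.le, div_self hγ0.ne']
    have hsqrt0 : Real.sqrt (1 - chi μ σ γ κ ^ 2) = 0 := by
      rw [hchi1]; simp
    have hL1 : (ellL μ σ γ κ).1 = 1 / rho μ γ κ := by rw [ellL, if_pos hcase]
    have hL2 : (ellL μ σ γ κ).2 = 1 / rho μ γ κ := by rw [ellL, if_pos hcase]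
    constructor
    · rw [hξeq]
      intro h
      rw [Prod.ext_iff] at h
      have h1' := h.1
      simp only [Prod.fst_zero] at h1'
      rcases hs₁ with rfl | rfl <;> rw [hchi1] at h1' <;> nlinarith
    · rcases hs₁ with rfl | rfl
      · refine ⟨1, 0, ?_, fun _ => ⟨Or.inl rfl, rfl⟩, fun hc => absurd hcase hc⟩
        rw [hξeq, hL1, hL2, hsqrt0, hchi1, Prod.mk.injEq]
        constructor
        · rw [one_div, div_inv_eq_mul]; push_cast; ring
        · simp
      · refine ⟨-1, 0, ?_, fun _ => ⟨Or.inr rfl, rfl⟩, fun hc => absurd hcase hc⟩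
        rw [hξeq, hL1, hL2, hsqrt0, hchi1, Prod.mk.injEq]
        constructor
        · rw [one_div, div_inv_eq_mul]; push_cast; ring
        · simp
  · -- generic case
    have htγ : t < γ^2 := by
      have hlt : (κ-γ) - 4*μ/σ*γ*(γ^2-1) < 0 :=
        lt_of_le_of_ne (by linarith) (fun h => hcase (by linarith))
      have h' : t - γ^2 < 0 := by
        rw [key]; exact mul_neg_of_pos_of_neg (by positivity) hlt
      linarith
    have hchilt : chi μ σ γ κ < 1 := by
      rw [hchidef, div_lt_one hγ0]
      calc Real.sqrt t < Real.sqrt (γ^2) := Real.sqrt_lt_sqrt ht0.le htγ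
        _ = γ := Real.sqrt_sq hγ0.le
    have hsqpos : 0 < Real.sqrt (1 - chi μ σ γ κ ^ 2) := by
      apply Real.sqrt_pos.2
      nlinarith
    have hL1 : (ellL μ σ γ κ).1 = 1 / (rho μ γ κ * chi μ σ γ κ) := by
      rw [ellL, if_neg hcase]
    have hL2 : (ellL μ σ γ κ).2 = 1 / (rho μ γ κ * Real.sqrt (1 - chi μ σ γ κ ^ 2)) := by
      rw [ellL, if_neg hcase]
    constructor
    · rw [hξeq]
      intro h
      rw [Prod.ext_iff] at h
      have h1' := h.1
      simp only [Prod.fst_zero] at h1'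
      have hpos : 0 < rho μ γ κ * chi μ σ γ κ := mul_pos hρ hchi0
      rcases hs₁ with rfl | rfl
      · rw [one_mul] at h1'; exact hpos.ne' h1'
      · rw [neg_one_mul, mul_neg, neg_eq_zero] at h1'; exact hpos.ne' h1'
    · rcases hs₁ with rfl | rfl <;> rcases hs₂ with rfl | rfl
      · refine ⟨1, 1, ?_, fun hc => absurd hc hcase,
          fun _ => ⟨Or.inl rfl, Or.inl rfl⟩⟩
        rw [hξeq, hL1, hL2, Prod.mk.injEq]
        constructor <;> · rw [one_div, div_inv_eq_mul]; push_cast; ring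
      · refine ⟨1, -1, ?_, fun hc => absurd hc hcase,
          fun _ => ⟨Or.inl rfl, Or.inr rfl⟩⟩
        rw [hξeq, hL1, hL2, Prod.mk.injEq]
        constructor <;> · rw [one_div, div_inv_eq_mul]; push_cast; ring
      · refine ⟨-1, 1, ?_, fun hc => absurd hc hcase,
          fun _ => ⟨Or.inr rfl, Or.inl rfl⟩⟩
        rw [hξeq, hL1, hL2, Prod.mk.injEq]
        constructor <;> · rw [one_div, div_inv_eq_mul]; push_cast; ring
      · refine ⟨-1, -1, ?_, fun hc => absurd hc hcase,
          fun _ => ⟨Or.inr rfl, Or.inr rfl⟩⟩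
        rw [hξeq, hL1, hL2, Prod.mk.injEq]
        constructor <;> · rw [one_div, div_inv_eq_mul]; push_cast; ring
end

section
/- Multiparameter bifurcation (abstract version, existence part): Let X, Y be real Banach spaces, n ≥ 1, U ⊆ ℝⁿ × X open, f : U → Y smooth, and (λ⋆, 0) ∈ U. Assume (i) f(λ⋆+λ, 0) = 0 whenever (λ⋆+λ, 0) ∈ U; (ii) D₂f(λ⋆,0) has closed range F⋆ of codimension n and kernel E⋆ of dimension n; (iii) there is v ∈ E⋆ \ {0} with Y = F⋆ ⊕ span(D_{1,1}D₂f(λ⋆,0)v) ⊕ ⋯ ⊕ span(D_{1,n}D₂f(λ⋆,0)v). Then for any complement Z of E⋆ in X, the map F(α,v,λ,z) defined as α⁻¹f(λ⋆+λ, α(v+z)) for α ≠ 0 and as D₂f(λ⋆+λ,0)(v+z) for α = 0 has partial derivative D_{(λ,z)}F(0,v,0,0) : ℝⁿ × Z → Y, given by (λ̄,z̄) ↦ D₂f(λ⋆,0)z̄ + Σⱼ λ̄ⱼ D_{1,j}D₂f(λ⋆,0)v, which is a Banach space isomorphism. -/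
/-- Multiparameter bifurcation, existence part (key linear step): under the
hypotheses (i)-(iii), for any closed complement Z of E⋆ = ker D₂f(λ⋆,0) in X, the
partial derivative at (0,v,0,0) of the blown-up map F, namely
(λ̄, z̄) ↦ D₂f(λ⋆,0)z̄ + Σⱼ λ̄ⱼ D_{1,j}D₂f(λ⋆,0)v, is a Banach space isomorphism
ℝⁿ × Z ≃ Y. -/
theorem multiparameter_bifurcation_linear_step {X Y : Type*}
    [NormedAddCommGroup X] [NormedSpace ℝ X] [CompleteSpace X]
    [NormedAddCommGroup Y] [NormedSpace ℝ Y] [CompleteSpace Y]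
    (n : ℕ) (hn : 1 ≤ n)
    (U : Set ((Fin n → ℝ) × X)) (hU : IsOpen U)
    (f : (Fin n → ℝ) × X → Y) (hf : ContDiffOn ℝ (⊤ : ℕ∞) f U)
    (lam0 : Fin n → ℝ) (hmem : (lam0, (0 : X)) ∈ U)
    (htrivial : ∀ lam : Fin n → ℝ, (lam, (0 : X)) ∈ U → f (lam, 0) = 0)
    (T : X →L[ℝ] Y) (hT : (T : X → Y) = fderiv ℝ (fun x' => f (lam0, x')) 0)
    (hclosed : IsClosed (LinearMap.range (T : X →ₗ[ℝ] Y) : Set Y))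
    (hker : Module.finrank ℝ (LinearMap.ker (T : X →ₗ[ℝ] Y)) = n)
    (hcoker : Module.finrank ℝ (Y ⧸ LinearMap.range (T : X →ₗ[ℝ] Y)) = n)
    (v : X) (hvker : v ∈ LinearMap.ker (T : X →ₗ[ℝ] Y)) (hv0 : v ≠ 0)
    (w : Fin n → Y)
    (hw : ∀ j : Fin n, w j =
      fderiv ℝ (fun lam => fderiv ℝ (fun x' => f (lam, x')) 0 v) lam0 (Pi.single j 1))
    (hdirect : ∀ yy : Y, ∃! p : Y × (Fin n → ℝ),
      p.1 ∈ LinearMap.range (T : X →ₗ[ℝ] Y) ∧ yy = p.1 + ∑ j, p.2 j • w j)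
    (Z : Submodule ℝ X) (hZclosed : IsClosed (Z : Set X))
    (hcompl : IsCompl (LinearMap.ker (T : X →ₗ[ℝ] Y)) Z) :
    ∃ e : ((Fin n → ℝ) × Z) ≃L[ℝ] Y, ∀ (lam : Fin n → ℝ) (z : Z),
      e (lam, z) = T z + ∑ j, lam j • w j := by
  haveI : CompleteSpace Z := hZclosed.completeSpace_coe
  -- the continuous linear map S : (Fin n → ℝ) →L[ℝ] Y, λ ↦ ∑ λⱼ • wⱼ
  set S : (Fin n → ℝ) →L[ℝ] Y :=
    ∑ j, (ContinuousLinearMap.proj j (R := ℝ) (φ := fun _ : Fin n => ℝ)).smulRight (w j)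
    with hS
  have hSapp : ∀ lam : Fin n → ℝ, S lam = ∑ j, lam j • w j := by
    intro lam
    simp [hS, ContinuousLinearMap.sum_apply]
  set L : ((Fin n → ℝ) × Z) →L[ℝ] Y :=
    (T.comp Z.subtypeL).comp (ContinuousLinearMap.snd ℝ (Fin n → ℝ) Z)
      + S.comp (ContinuousLinearMap.fst ℝ (Fin n → ℝ) Z) with hL
  have hLapp : ∀ (lam : Fin n → ℝ) (z : Z), L (lam, z) = T z + ∑ j, lam j • w j := by
    intro lam z
    simp [hL, hSapp]
  have hinj : LinearMap.ker (L : ((Fin n → ℝ) × Z) →ₗ[ℝ] Y) = ⊥ := by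
    rw [LinearMap.ker_eq_bot']
    rintro ⟨lam, z⟩ h
    rw [ContinuousLinearMap.coe_coe, hLapp] at h
    obtain ⟨p, hp, hpu⟩ := hdirect 0
    have h1 := hpu (T z, lam) ⟨⟨z, rfl⟩, h.symm⟩
    have h2 := hpu (0, 0) ⟨Submodule.zero_mem _, by simp⟩
    have h3 : ((T z : Y), lam) = ((0 : Y), (0 : Fin n → ℝ)) := h1.trans h2.symm
    have hz : (z : X) ∈ LinearMap.ker (T : X →ₗ[ℝ] Y) ⊓ Z := ⟨by
      simpa using congrArg Prod.fst h3, z.2⟩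
    rw [hcompl.inf_eq_bot] at hz
    have : (z : X) = 0 := hz
    have hz0 : z = 0 := Subtype.ext this
    have hlam0 : lam = 0 := congrArg Prod.snd h3
    simp [hz0, hlam0]
  have hsurj : LinearMap.range (L : ((Fin n → ℝ) × Z) →ₗ[ℝ] Y) = ⊤ := by
    rw [LinearMap.range_eq_top]
    intro y
    obtain ⟨⟨p1, p2⟩, ⟨⟨x, hx⟩, hy⟩, _⟩ := hdirect y
    -- decompose x = k + z with k ∈ ker T, z ∈ Z
    have hx' : x ∈ LinearMap.ker (T : X →ₗ[ℝ] Y) ⊔ Z := by rw [hcompl.sup_eq_top]; trivial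
    obtain ⟨k, hk, z, hz, hkz⟩ := Submodule.mem_sup.mp hx'
    refine ⟨(p2, ⟨z, hz⟩), ?_⟩
    rw [ContinuousLinearMap.coe_coe, hLapp]
    have hTz : T z = p1 := by
      have : T x = T k + T z := by rw [← hkz]; simp
      rw [← ContinuousLinearMap.coe_coe T, hx, ContinuousLinearMap.coe_coe] at this
      have hk0 : T k = 0 := hk
      rw [hk0, zero_add] at this
      exact this.symm
    rw [hTz, hy]
  exact ⟨ContinuousLinearEquiv.ofBijective L hinj hsurj, fun lam z => by
    simp [ContinuousLinearEquiv.coeFn_ofBijective, hLapp]⟩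
end

section
/- Let L ∈ (ℝ⁺)² and η ∈ H³(𝕋²_L) with zero average, η even in the second variable, and Q(γ,κ,η) = 0, where Q(γ,κ,η) = Δ⁻²[((γ−κ) − 4μγΔ)∂₁η + (Δ − γ²∂₁² − σΔ²)η]. If (γ,κ) ∈ 𝔈 and L = 𝔩(γ,κ), then the Fourier transform of η is supported on V(γ,κ), and the kernel of Q(γ,κ,·) in this symmetry class is a 2-dimensional real vector space. -/
open scoped Classical

/-- The kernel of Q(γ,κ,·), described on the Fourier side: sequences of Fourier
coefficients on the lattice (ℤ/L₁)×(ℤ/L₂) which are mean-zero, conjugate-symmetric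
(real-valued function), even in the second variable, and annihilated by the
symbol q_{γ,κ}. -/
noncomputable def KerQ (μ σ γ κ L1 L2 : ℝ) : Set (ℤ × ℤ → ℂ) :=
  {a | a (0, 0) = 0 ∧
    (∀ m n : ℤ, a (-m, -n) = (starRingEnd ℂ) (a (m, n))) ∧
    (∀ m n : ℤ, a (m, -n) = a (m, n)) ∧
    (∀ m n : ℤ, ¬(m = 0 ∧ n = 0) →
      qsym μ σ γ κ ((m : ℝ) / L1, (n : ℝ) / L2) * a (m, n) = 0)}

lemma int_sq_one {m : ℤ} : m ^ 2 = 1 ↔ m = 1 ∨ m = -1 := by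
  constructor
  · intro h
    have h2 : (m - 1) * (m + 1) = 0 := by linear_combination h
    rcases mul_eq_zero.1 h2 with h | h
    · left; omega
    · right; omega
  · rintro (rfl | rfl) <;> norm_num

lemma div_one_div' (a b : ℝ) : a / (1 / b) = a * b := by
  rw [div_div_eq_mul_div, div_one]

lemma ratio_pos {γ κ : ℝ} (hγ : 0 < γ) (h1 : 0 < κ - γ) : 0 < κ / γ - 1 := by
  have : 1 < κ / γ := (one_lt_div hγ).2 (by linarith)
  linarith

lemma rho_pos {μ γ κ : ℝ} (hμ : 0 < μ) (hγ : 0 < γ) (h1 : 0 < κ - γ) :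
    0 < rho μ γ κ := by
  apply Real.sqrt_pos.2
  apply div_pos (ratio_pos hγ h1)
  positivity

lemma rho_sq {μ γ κ : ℝ} (hμ : 0 < μ) (hγ : 0 < γ) (h1 : 0 < κ - γ) :
    rho μ γ κ ^ 2 = (κ / γ - 1) / (16 * Real.pi ^ 2 * μ) := by
  apply Real.sq_sqrt
  have := ratio_pos hγ h1
  positivity

lemma chi_arg_nonneg {μ σ γ κ : ℝ} (hμ : 0 < μ) (hσ : 0 < σ) (hγ : 0 < γ)
    (h1 : 0 < κ - γ) : 0 ≤ 1 + σ / (4 * μ) * (κ / γ - 1) := by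
  have h := ratio_pos hγ h1
  have : 0 ≤ σ / (4 * μ) * (κ / γ - 1) := mul_nonneg (by positivity) h.le
  linarith

lemma chi_pos {μ σ γ κ : ℝ} (hμ : 0 < μ) (hσ : 0 < σ) (hγ : 0 < γ)
    (h1 : 0 < κ - γ) : 0 < chi μ σ γ κ := by
  have h := ratio_pos hγ h1
  have harg : 0 < 1 + σ / (4 * μ) * (κ / γ - 1) := by
    have : 0 ≤ σ / (4 * μ) * (κ / γ - 1) := mul_nonneg (by positivity) h.le
    linarith
  exact mul_pos (by positivity) (Real.sqrt_pos.2 harg)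

lemma gamma_chi_sq {μ σ γ κ : ℝ} (hμ : 0 < μ) (hσ : 0 < σ) (hγ : 0 < γ)
    (h1 : 0 < κ - γ) :
    γ ^ 2 * chi μ σ γ κ ^ 2 = 1 + 4 * Real.pi ^ 2 * σ * rho μ γ κ ^ 2 := by
  rw [chi, mul_pow, Real.sq_sqrt (chi_arg_nonneg hμ hσ hγ h1), rho_sq hμ hγ h1]
  have hpi := Real.pi_ne_zero
  field_simp
  ring

lemma chi_eq_one {μ σ γ κ : ℝ} (hμ : 0 < μ) (hσ : 0 < σ) (hγ : 0 < γ)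
    (h1 : 0 < κ - γ) (heq : κ - γ = 4 * μ / σ * γ * (γ ^ 2 - 1)) :
    chi μ σ γ κ = 1 := by
  have hσ' : σ ≠ 0 := ne_of_gt hσ
  have hγ' : γ ≠ 0 := ne_of_gt hγ
  have hμ' : (4:ℝ) * μ ≠ 0 := by positivity
  have heq' : σ * (κ - γ) = 4 * μ * γ * (γ ^ 2 - 1) := by
    field_simp at heq
    linarith
  have hX : 1 + σ / (4 * μ) * (κ / γ - 1) = γ ^ 2 := by
    field_simp
    linear_combination heq'
  rw [chi, hX, Real.sqrt_sq hγ.le]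
  field_simp

lemma chi_lt_one {μ σ γ κ : ℝ} (hμ : 0 < μ) (hσ : 0 < σ) (hγ : 0 < γ)
    (h1 : 0 < κ - γ) (h2 : κ - γ ≤ 4 * μ / σ * γ * (γ ^ 2 - 1))
    (hne : ¬ κ - γ = 4 * μ / σ * γ * (γ ^ 2 - 1)) :
    chi μ σ γ κ < 1 := by
  have hγ' : γ ≠ 0 := ne_of_gt hγ
  have hlt : κ - γ < 4 * μ / σ * γ * (γ ^ 2 - 1) := lt_of_le_of_ne h2 hne
  have heq' : σ * (κ - γ) < 4 * μ * γ * (γ ^ 2 - 1) := by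
    have := mul_lt_mul_of_pos_left hlt hσ
    calc σ * (κ - γ) < σ * (4 * μ / σ * γ * (γ ^ 2 - 1)) := this
    _ = 4 * μ * γ * (γ ^ 2 - 1) := by field_simp
  have hX : 1 + σ / (4 * μ) * (κ / γ - 1) < γ ^ 2 := by
    rw [div_sub_one hγ', div_mul_div_comm]
    have h3 : σ * (κ - γ) / (4 * μ * γ) < γ ^ 2 - 1 := by
      rw [div_lt_iff₀ (by positivity)]
      nlinarith
    linarith
  have := Real.sqrt_lt_sqrt (chi_arg_nonneg hμ hσ hγ h1) hX
  rw [Real.sqrt_sq hγ.le] at this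
  calc chi μ σ γ κ < (1/γ) * γ := by
        rw [chi]
        exact mul_lt_mul_of_pos_left this (by positivity)
  _ = 1 := by field_simp

lemma I_mul_sub_eq_zero (A B : ℝ) :
    Complex.I * (A : ℂ) - (B : ℂ) = 0 ↔ A = 0 ∧ B = 0 := by
  constructor
  · intro h
    have hre := congrArg Complex.re h
    have him := congrArg Complex.im h
    simp [Complex.ext_iff] at hre him
    exact ⟨him, hre⟩
  · rintro ⟨rfl, rfl⟩; simp

lemma qsym_eq_zero_iff {μ σ γ κ : ℝ} (hμ : 0 < μ) (hσ : 0 < σ) (hγ : 0 < γ)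
    (h1 : 0 < κ - γ) (x y : ℝ) :
    qsym μ σ γ κ (x, y) = 0 ↔
      (x * ((x ^ 2 + y ^ 2) - rho μ γ κ ^ 2) = 0 ∧
       (x ^ 2 + y ^ 2) - γ ^ 2 * x ^ 2 + 4 * Real.pi ^ 2 * σ * (x ^ 2 + y ^ 2) ^ 2 = 0) := by
  have hpi := Real.pi_pos
  have hr2 : 16 * Real.pi ^ 2 * μ * γ * rho μ γ κ ^ 2 = γ * κ / γ - γ := by
    rw [rho_sq hμ hγ h1]; field_simp
  have hr2' : 16 * Real.pi ^ 2 * μ * γ * rho μ γ κ ^ 2 = κ - γ := by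
    rw [hr2]; field_simp
  rw [show qsym μ σ γ κ (x, y) =
      Complex.I * ((2 * Real.pi * x *
        (γ - κ + 16 * Real.pi ^ 2 * μ * γ * (x ^ 2 + y ^ 2)) : ℝ) : ℂ) -
      ((4 * Real.pi ^ 2 * ((x ^ 2 + y ^ 2) - γ ^ 2 * x ^ 2 +
        4 * Real.pi ^ 2 * σ * (x ^ 2 + y ^ 2) ^ 2) : ℝ) : ℂ) from rfl,
    I_mul_sub_eq_zero]
  constructor
  · rintro ⟨hA, hB⟩
    constructor
    · have hA' : (32 * Real.pi ^ 3 * μ * γ) * (x * ((x ^ 2 + y ^ 2) - rho μ γ κ ^ 2)) = 0 := by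
        linear_combination hA - (2 * Real.pi * x) * hr2'
      rcases mul_eq_zero.1 hA' with h | h
      · exact absurd h (by positivity)
      · exact h
    · have hB' : (4 * Real.pi ^ 2) *
          ((x ^ 2 + y ^ 2) - γ ^ 2 * x ^ 2 + 4 * Real.pi ^ 2 * σ * (x ^ 2 + y ^ 2) ^ 2) = 0 := by
        linear_combination hB
      rcases mul_eq_zero.1 hB' with h | h
      · exact absurd h (by positivity)
      · exact h
  · rintro ⟨hA, hB⟩
    constructor
    · linear_combination (32 * Real.pi ^ 3 * μ * γ) * hA + (2 * Real.pi * x) * hr2'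
    · linear_combination (4 * Real.pi ^ 2) * hB

lemma core_strict (γ c s r b M N : ℝ) (hr : 0 < r) (hc : 0 < c) (hs : 0 < s)
    (hcs : c ^ 2 + s ^ 2 = 1) (hb : 0 < b) (hgc : γ ^ 2 * c ^ 2 = 1 + b * r ^ 2) :
    (M * (r * c) * (((M * (r * c)) ^ 2 + (N * (r * s)) ^ 2) - r ^ 2) = 0 ∧
     ((M * (r * c)) ^ 2 + (N * (r * s)) ^ 2) - γ ^ 2 * (M * (r * c)) ^ 2 +
       b * ((M * (r * c)) ^ 2 + (N * (r * s)) ^ 2) ^ 2 = 0) ↔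
    ((M = 0 ∧ N = 0) ∨ (M ^ 2 = 1 ∧ N ^ 2 = 1)) := by
  constructor
  · rintro ⟨hA, hB⟩
    have hA' : r ^ 3 * c * (M * ((M ^ 2 * c ^ 2 + N ^ 2 * s ^ 2) - 1)) = 0 := by
      linear_combination hA
    have hA'' : M * ((M ^ 2 * c ^ 2 + N ^ 2 * s ^ 2) - 1) = 0 := by
      rcases mul_eq_zero.1 hA' with h | h
      · exact absurd h (by positivity)
      · exact h
    have hB' : (M ^ 2 * c ^ 2 + N ^ 2 * s ^ 2) - γ ^ 2 * c ^ 2 * M ^ 2 +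
        b * r ^ 2 * (M ^ 2 * c ^ 2 + N ^ 2 * s ^ 2) ^ 2 = 0 := by
      have h2 : r ^ 2 * ((M ^ 2 * c ^ 2 + N ^ 2 * s ^ 2) - γ ^ 2 * c ^ 2 * M ^ 2 +
          b * r ^ 2 * (M ^ 2 * c ^ 2 + N ^ 2 * s ^ 2) ^ 2) = 0 := by
        linear_combination hB
      rcases mul_eq_zero.1 h2 with h | h
      · exact absurd h (by positivity)
      · exact h
    rcases mul_eq_zero.1 hA'' with hM | hT
    · left
      refine ⟨hM, ?_⟩
      rw [hM] at hB'
      have hNs : N ^ 2 * s ^ 2 = 0 := by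
        nlinarith [sq_nonneg (N * s), mul_nonneg (mul_nonneg hb.le (sq_nonneg r))
          (sq_nonneg (N ^ 2 * s ^ 2))]
      have : N ^ 2 = 0 := by
        rcases mul_eq_zero.1 hNs with h | h
        · exact h
        · exact absurd h (by positivity)
      exact pow_eq_zero_iff (two_ne_zero) |>.1 this
    · right
      have hM2 : M ^ 2 = 1 := by
        have h3 : (1 + b * r ^ 2) * (1 - M ^ 2) = 0 := by
          linear_combination hB' - (1 + b * r ^ 2 * ((M ^ 2 * c ^ 2 + N ^ 2 * s ^ 2) + 1)) * hT
            + M ^ 2 * hgc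
        rcases mul_eq_zero.1 h3 with h | h
        · exact absurd h (by positivity)
        · linarith
      refine ⟨hM2, ?_⟩
      have h4 : (N ^ 2 - 1) * s ^ 2 = 0 := by
        linear_combination hT - c ^ 2 * hM2 - hcs
      rcases mul_eq_zero.1 h4 with h | h
      · linarith
      · exact absurd h (by positivity)
  · rintro (⟨hM, hN⟩ | ⟨hM2, hN2⟩)
    · rw [hM, hN]; constructor <;> ring
    · have hT1 : M ^ 2 * c ^ 2 + N ^ 2 * s ^ 2 = 1 := by
        linear_combination c ^ 2 * hM2 + s ^ 2 * hN2 + hcs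
      have hS : (M * (r * c)) ^ 2 + (N * (r * s)) ^ 2 = r ^ 2 := by
        linear_combination r ^ 2 * hT1
      rw [hS]
      constructor
      · ring
      · linear_combination (-(M ^ 2 * r ^ 2)) * hgc - (r ^ 2 + b * r ^ 4) * hM2

lemma core_eq (γ r b M N : ℝ) (hr : 0 < r) (hb : 0 < b)
    (hgc : γ ^ 2 = 1 + b * r ^ 2) :
    (M * r * (((M * r) ^ 2 + (N * r) ^ 2) - r ^ 2) = 0 ∧
     ((M * r) ^ 2 + (N * r) ^ 2) - γ ^ 2 * (M * r) ^ 2 +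
       b * ((M * r) ^ 2 + (N * r) ^ 2) ^ 2 = 0) ↔
    ((M = 0 ∧ N = 0) ∨ (M ^ 2 = 1 ∧ N = 0)) := by
  constructor
  · rintro ⟨hA, hB⟩
    have hA'' : M * ((M ^ 2 + N ^ 2) - 1) = 0 := by
      have hA' : r ^ 3 * (M * ((M ^ 2 + N ^ 2) - 1)) = 0 := by linear_combination hA
      rcases mul_eq_zero.1 hA' with h | h
      · exact absurd h (by positivity)
      · exact h
    have hB' : (M ^ 2 + N ^ 2) - γ ^ 2 * M ^ 2 + b * r ^ 2 * (M ^ 2 + N ^ 2) ^ 2 = 0 := by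
      have h2 : r ^ 2 * ((M ^ 2 + N ^ 2) - γ ^ 2 * M ^ 2 +
          b * r ^ 2 * (M ^ 2 + N ^ 2) ^ 2) = 0 := by linear_combination hB
      rcases mul_eq_zero.1 h2 with h | h
      · exact absurd h (by positivity)
      · exact h
    rcases mul_eq_zero.1 hA'' with hM | hT
    · left
      refine ⟨hM, ?_⟩
      rw [hM] at hB'
      have hN2 : N ^ 2 = 0 := by
        nlinarith [sq_nonneg N, mul_nonneg (mul_nonneg hb.le (sq_nonneg r)) (sq_nonneg (N ^ 2))]
      exact pow_eq_zero_iff (two_ne_zero) |>.1 hN2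
    · right
      have hM2 : M ^ 2 = 1 := by
        have h3 : (1 + b * r ^ 2) * (1 - M ^ 2) = 0 := by
          linear_combination hB' - (1 + b * r ^ 2 * ((M ^ 2 + N ^ 2) + 1)) * hT + M ^ 2 * hgc
        rcases mul_eq_zero.1 h3 with h | h
        · exact absurd h (by positivity)
        · linarith
      refine ⟨hM2, ?_⟩
      have hN2 : N ^ 2 = 0 := by linear_combination hT - hM2
      exact pow_eq_zero_iff (two_ne_zero) |>.1 hN2
  · rintro (⟨hM, hN⟩ | ⟨hM2, hN⟩)
    · rw [hM, hN]; constructor <;> ring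
    · have hS : (M * r) ^ 2 + (N * r) ^ 2 = r ^ 2 := by
        rw [hN]; linear_combination r ^ 2 * hM2
      rw [hS]
      constructor
      · ring
      · linear_combination (-(r ^ 2) * γ ^ 2) * hM2 - r ^ 2 * hgc

noncomputable def bas1 (N : ℤ) : ℤ × ℤ → ℂ :=
  fun p => if p.1 ^ 2 = 1 ∧ p.2 ^ 2 = N ^ 2 then 1 else 0
noncomputable def bas2 (N : ℤ) : ℤ × ℤ → ℂ :=
  fun p => if p.1 ^ 2 = 1 ∧ p.2 ^ 2 = N ^ 2 then (p.1 : ℂ) * Complex.I else 0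

lemma bas1_apply (N m n : ℤ) :
    bas1 N (m, n) = if m ^ 2 = 1 ∧ n ^ 2 = N ^ 2 then 1 else 0 := rfl
lemma bas2_apply (N m n : ℤ) :
    bas2 N (m, n) = if m ^ 2 = 1 ∧ n ^ 2 = N ^ 2 then (m : ℂ) * Complex.I else 0 := rfl

lemma helper1 (z : ℂ) : z.re • (1 : ℂ) + z.im • ((1 : ℂ) * Complex.I) = z := by
  rw [Complex.real_smul, Complex.real_smul, mul_one, one_mul]
  exact Complex.re_add_im z

lemma helper2 (z : ℂ) : z.re • (1 : ℂ) + z.im • ((-1 : ℂ) * Complex.I) = (starRingEnd ℂ) z := by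
  rw [Complex.real_smul, Complex.real_smul]
  apply Complex.ext <;> simp

lemma main_aux (μ σ γ κ L1 L2 : ℝ) (N : ℤ)
    (hzero : ∀ m n : ℤ, qsym μ σ γ κ ((m : ℝ) / L1, (n : ℝ) / L2) = 0 ↔
      ((m = 0 ∧ n = 0) ∨ (m ^ 2 = 1 ∧ n ^ 2 = N ^ 2)))
    (hV : ∀ m n : ℤ, (((m : ℝ) / L1, (n : ℝ) / L2) ∈ Vset μ σ γ κ) ↔
      (m ^ 2 = 1 ∧ n ^ 2 = N ^ 2)) :
    (∀ a ∈ KerQ μ σ γ κ L1 L2, ∀ m n : ℤ,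
      ((m : ℝ) / L1, (n : ℝ) / L2) ∉ Vset μ σ γ κ → a (m, n) = 0) ∧
    (∃ a₁ a₂ : ℤ × ℤ → ℂ,
      a₁ ∈ KerQ μ σ γ κ L1 L2 ∧ a₂ ∈ KerQ μ σ γ κ L1 L2 ∧
      LinearIndependent ℝ ![a₁, a₂] ∧
      ∀ a ∈ KerQ μ σ γ κ L1 L2, ∃ c d : ℝ, a = c • a₁ + d • a₂) := by
  have vanish : ∀ a ∈ KerQ μ σ γ κ L1 L2, ∀ m n : ℤ,
      ¬(m ^ 2 = 1 ∧ n ^ 2 = N ^ 2) → a (m, n) = 0 := by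
    rintro a ⟨h0, hconj, heven, hq⟩ m n hns
    by_cases hmn : m = 0 ∧ n = 0
    · rcases hmn with ⟨rfl, rfl⟩; exact h0
    · have hq' := hq m n hmn
      rcases mul_eq_zero.1 hq' with h | h
      · rcases (hzero m n).1 h with h' | h'
        · exact absurd h' hmn
        · exact absurd h' hns
      · exact h
  constructor
  · intro a ha m n hnot
    exact vanish a ha m n (fun hc => hnot ((hV m n).2 hc))
  · have hzero_supp : ∀ m n : ℤ, m ^ 2 = 1 ∧ n ^ 2 = N ^ 2 →
        qsym μ σ γ κ ((m : ℝ) / L1, (n : ℝ) / L2) = 0 :=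
      fun m n h => (hzero m n).2 (Or.inr h)
    have ha₁ : bas1 N ∈ KerQ μ σ γ κ L1 L2 := by
      refine ⟨?_, ?_, ?_, ?_⟩
      · rw [bas1_apply, if_neg]
        rintro ⟨h, -⟩
        omega
      · intro m n
        rw [bas1_apply, bas1_apply, neg_sq, neg_sq]
        split_ifs <;> simp
      · intro m n
        rw [bas1_apply, bas1_apply, neg_sq]
      · intro m n hmn
        by_cases hs : m ^ 2 = 1 ∧ n ^ 2 = N ^ 2
        · rw [hzero_supp m n hs, zero_mul]
        · rw [bas1_apply, if_neg hs, mul_zero]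
    have ha₂ : bas2 N ∈ KerQ μ σ γ κ L1 L2 := by
      refine ⟨?_, ?_, ?_, ?_⟩
      · rw [bas2_apply, if_neg]
        rintro ⟨h, -⟩
        omega
      · intro m n
        rw [bas2_apply, bas2_apply, neg_sq, neg_sq]
        split_ifs with h
        · rw [map_mul, Complex.conj_I, map_intCast]
          push_cast
          ring
        · simp
      · intro m n
        rw [bas2_apply, bas2_apply, neg_sq]
      · intro m n hmn
        by_cases hs : m ^ 2 = 1 ∧ n ^ 2 = N ^ 2
        · rw [hzero_supp m n hs, zero_mul]
        · rw [bas2_apply, if_neg hs, mul_zero]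
    have hcond : ((1 : ℤ) ^ 2 = 1 ∧ N ^ 2 = N ^ 2) := ⟨one_pow 2, rfl⟩
    refine ⟨bas1 N, bas2 N, ha₁, ha₂, ?_, ?_⟩
    · rw [LinearIndependent.pair_iff]
      intro st t h
      have h1 := congrFun h (1, N)
      rw [Pi.add_apply, Pi.smul_apply, Pi.smul_apply, bas1_apply, bas2_apply,
        if_pos hcond, if_pos hcond] at h1
      push_cast at h1
      rw [Complex.real_smul, Complex.real_smul, mul_one, one_mul] at h1
      have hre := congrArg Complex.re h1
      have him := congrArg Complex.im h1
      simp at hre him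
      exact ⟨hre, him⟩
    · rintro a ha
      obtain ⟨h0, hconj, heven, hq⟩ := ha
      refine ⟨(a (1, N)).re, (a (1, N)).im, ?_⟩
      funext p
      obtain ⟨m, n⟩ := p
      rw [Pi.add_apply, Pi.smul_apply, Pi.smul_apply, bas1_apply, bas2_apply]
      by_cases hs : m ^ 2 = 1 ∧ n ^ 2 = N ^ 2
      · rw [if_pos hs, if_pos hs]
        obtain ⟨hm, hn⟩ := hs
        have hm' : m = 1 ∨ m = -1 := by
          rcases mul_eq_zero.1 (show (m - 1) * (m + 1) = 0 by linear_combination hm) with h | h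
          · left; omega
          · right; omega
        have hn' : n = N ∨ n = -N := by
          rcases mul_eq_zero.1 (show (n - N) * (n + N) = 0 by linear_combination hn) with h | h
          · left; omega
          · right; omega
        have hconjval : a (-1, N) = (starRingEnd ℂ) (a (1, N)) :=
          calc a (-1, N) = a (-1, -(-N)) := by rw [neg_neg]
            _ = (starRingEnd ℂ) (a (1, -N)) := hconj 1 (-N)
            _ = (starRingEnd ℂ) (a (1, N)) := by rw [heven 1 N]
        rcases hm' with hm1 | hm1 <;> rcases hn' with hn1 | hn1 <;> rw [hm1, hn1] <;> push_cast
        · exact (helper1 (a (1, N))).symm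
        · rw [heven 1 N]; exact (helper1 (a (1, N))).symm
        · rw [hconjval]; exact (helper2 (a (1, N))).symm
        · rw [hconj 1 N]; exact (helper2 (a (1, N))).symm
      · rw [if_neg hs, if_neg hs, vanish a ⟨h0, hconj, heven, hq⟩ m n hs]
        simp

lemma zeros_strict {μ σ γ κ : ℝ} (hμ : 0 < μ) (hσ : 0 < σ) (hγ : 1 < γ)
    (h1 : 0 < κ - γ) (h2 : κ - γ ≤ 4 * μ / σ * γ * (γ ^ 2 - 1))
    (hne : ¬ κ - γ = 4 * μ / σ * γ * (γ ^ 2 - 1)) (m n : ℤ) :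
    qsym μ σ γ κ ((m : ℝ) * (rho μ γ κ * chi μ σ γ κ),
        (n : ℝ) * (rho μ γ κ * Real.sqrt (1 - chi μ σ γ κ ^ 2))) = 0 ↔
      ((m = 0 ∧ n = 0) ∨ (m ^ 2 = 1 ∧ n ^ 2 = 1 ^ 2)) := by
  have hγ0 : (0:ℝ) < γ := by linarith
  have hc := chi_pos hμ hσ hγ0 h1
  have hclt := chi_lt_one hμ hσ hγ0 h1 h2 hne
  have hr := rho_pos hμ hγ0 h1
  have hs2 : Real.sqrt (1 - chi μ σ γ κ ^ 2) ^ 2 = 1 - chi μ σ γ κ ^ 2 :=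
    Real.sq_sqrt (by nlinarith)
  have hs : 0 < Real.sqrt (1 - chi μ σ γ κ ^ 2) := Real.sqrt_pos.2 (by nlinarith)
  have hcs : chi μ σ γ κ ^ 2 + Real.sqrt (1 - chi μ σ γ κ ^ 2) ^ 2 = 1 := by
    rw [hs2]; ring
  rw [qsym_eq_zero_iff hμ hσ hγ0 h1,
    core_strict γ (chi μ σ γ κ) (Real.sqrt (1 - chi μ σ γ κ ^ 2)) (rho μ γ κ)
      (4 * Real.pi ^ 2 * σ) (m : ℝ) (n : ℝ) hr hc hs hcs (by positivity)
      (gamma_chi_sq hμ hσ hγ0 h1)]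
  constructor
  · rintro (⟨hM, hN⟩ | ⟨hM, hN⟩)
    · exact Or.inl ⟨by exact_mod_cast hM, by exact_mod_cast hN⟩
    · refine Or.inr ⟨by exact_mod_cast hM, ?_⟩
      rw [one_pow]
      exact_mod_cast hN
  · rintro (⟨rfl, rfl⟩ | ⟨hM, hN⟩)
    · exact Or.inl ⟨by norm_num, by norm_num⟩
    · rw [one_pow] at hN
      exact Or.inr ⟨by exact_mod_cast hM, by exact_mod_cast hN⟩

lemma zeros_eq {μ σ γ κ : ℝ} (hμ : 0 < μ) (hσ : 0 < σ) (hγ : 1 < γ)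
    (h1 : 0 < κ - γ) (heq : κ - γ = 4 * μ / σ * γ * (γ ^ 2 - 1)) (m n : ℤ) :
    qsym μ σ γ κ ((m : ℝ) * rho μ γ κ, (n : ℝ) * rho μ γ κ) = 0 ↔
      ((m = 0 ∧ n = 0) ∨ (m ^ 2 = 1 ∧ n ^ 2 = 0 ^ 2)) := by
  have hγ0 : (0:ℝ) < γ := by linarith
  have hr := rho_pos hμ hγ0 h1
  have hχ1 := chi_eq_one hμ hσ hγ0 h1 heq
  have hgc : γ ^ 2 = 1 + 4 * Real.pi ^ 2 * σ * rho μ γ κ ^ 2 := by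
    have := gamma_chi_sq hμ hσ hγ0 h1
    rw [hχ1] at this
    linarith [this]
  rw [qsym_eq_zero_iff hμ hσ hγ0 h1,
    core_eq γ (rho μ γ κ) (4 * Real.pi ^ 2 * σ) (m : ℝ) (n : ℝ) hr (by positivity) hgc]
  constructor
  · rintro (⟨hM, hN⟩ | ⟨hM, hN⟩)
    · exact Or.inl ⟨by exact_mod_cast hM, by exact_mod_cast hN⟩
    · refine Or.inr ⟨by exact_mod_cast hM, ?_⟩
      have : n = 0 := by exact_mod_cast hN
      simp [this]
  · rintro (⟨rfl, rfl⟩ | ⟨hM, hN⟩)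
    · exact Or.inl ⟨by norm_num, by norm_num⟩
    · have hn0 : n = 0 := by
        have := pow_eq_zero_iff (n := 2) two_ne_zero |>.1 (by rw [hN]; ring)
        exact this
      refine Or.inr ⟨by exact_mod_cast hM, by rw [hn0]; norm_num⟩

lemma memV_strict {μ σ γ κ : ℝ} (hμ : 0 < μ) (hσ : 0 < σ) (hγ : 1 < γ)
    (h1 : 0 < κ - γ) (h2 : κ - γ ≤ 4 * μ / σ * γ * (γ ^ 2 - 1))
    (hne : ¬ κ - γ = 4 * μ / σ * γ * (γ ^ 2 - 1)) (m n : ℤ) :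
    (((m : ℝ) * (rho μ γ κ * chi μ σ γ κ),
        (n : ℝ) * (rho μ γ κ * Real.sqrt (1 - chi μ σ γ κ ^ 2))) ∈ Vset μ σ γ κ) ↔
      (m ^ 2 = 1 ∧ n ^ 2 = 1 ^ 2) := by
  have hγ0 : (0:ℝ) < γ := by linarith
  have hc := chi_pos hμ hσ hγ0 h1
  have hclt := chi_lt_one hμ hσ hγ0 h1 h2 hne
  have hr := rho_pos hμ hγ0 h1
  have hs : 0 < Real.sqrt (1 - chi μ σ γ κ ^ 2) := Real.sqrt_pos.2 (by nlinarith)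
  constructor
  · rintro ⟨s₁, s₂, hs₁, hs₂, hpt⟩
    rw [Prod.mk.injEq] at hpt
    obtain ⟨hp1, hp2⟩ := hpt
    have hm : (m : ℝ) = s₁ := by
      have h' : (m : ℝ) * (rho μ γ κ * chi μ σ γ κ) = s₁ * (rho μ γ κ * chi μ σ γ κ) := by
        rw [hp1]; ring
      exact mul_right_cancel₀ (by positivity) h'
    have hn : (n : ℝ) = s₂ := by
      have h' : (n : ℝ) * (rho μ γ κ * Real.sqrt (1 - chi μ σ γ κ ^ 2)) =
          s₂ * (rho μ γ κ * Real.sqrt (1 - chi μ σ γ κ ^ 2)) := by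
        rw [hp2]; ring
      exact mul_right_cancel₀ (by positivity) h'
    constructor
    · rcases hs₁ with h | h <;> rw [h] at hm
      · have : m = 1 := by exact_mod_cast hm
        simp [this]
      · have : m = -1 := by exact_mod_cast hm
        simp [this]
    · rcases hs₂ with h | h <;> rw [h] at hn
      · have : n = 1 := by exact_mod_cast hn
        simp [this]
      · have : n = -1 := by exact_mod_cast hn
        simp [this]
  · rintro ⟨hm, hn⟩
    rw [one_pow] at hn
    refine ⟨(m : ℝ), (n : ℝ), ?_, ?_, ?_⟩
    · rcases int_sq_one.1 hm with h | h <;> rw [h] <;> norm_num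
    · rcases int_sq_one.1 hn with h | h <;> rw [h] <;> norm_num
    · rw [Prod.mk.injEq]; constructor <;> ring

lemma memV_eq {μ σ γ κ : ℝ} (hμ : 0 < μ) (hσ : 0 < σ) (hγ : 1 < γ)
    (h1 : 0 < κ - γ) (heq : κ - γ = 4 * μ / σ * γ * (γ ^ 2 - 1)) (m n : ℤ) :
    (((m : ℝ) * rho μ γ κ, (n : ℝ) * rho μ γ κ) ∈ Vset μ σ γ κ) ↔
      (m ^ 2 = 1 ∧ n ^ 2 = 0 ^ 2) := by
  have hγ0 : (0:ℝ) < γ := by linarith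
  have hr := rho_pos hμ hγ0 h1
  have hχ1 := chi_eq_one hμ hσ hγ0 h1 heq
  have hsqz : Real.sqrt (1 - chi μ σ γ κ ^ 2) = 0 := by
    rw [hχ1]; norm_num
  constructor
  · rintro ⟨s₁, s₂, hs₁, hs₂, hpt⟩
    rw [Prod.mk.injEq] at hpt
    obtain ⟨hp1, hp2⟩ := hpt
    rw [hχ1] at hp1
    have hm : (m : ℝ) = s₁ := by
      have h' : (m : ℝ) * rho μ γ κ = s₁ * rho μ γ κ := by rw [hp1]; ring
      exact mul_right_cancel₀ (by positivity) h'
    have hn : (n : ℝ) = 0 := by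
      rw [hsqz] at hp2
      have h' : (n : ℝ) * rho μ γ κ = 0 := by rw [hp2]; ring
      rcases mul_eq_zero.1 h' with h | h
      · exact h
      · exact absurd h (by positivity)
    constructor
    · rcases hs₁ with h | h <;> rw [h] at hm
      · have : m = 1 := by exact_mod_cast hm
        simp [this]
      · have : m = -1 := by exact_mod_cast hm
        simp [this]
    · have : n = 0 := by exact_mod_cast hn
      simp [this]
  · rintro ⟨hm, hn⟩
    have hn0 : n = 0 := by
      have := pow_eq_zero_iff (n := 2) two_ne_zero |>.1 (by rw [hn]; ring)
      exact this
    refine ⟨(m : ℝ), 1, ?_, Or.inl rfl, ?_⟩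
    · rcases int_sq_one.1 hm with h | h <;> rw [h] <;> norm_num
    · rw [Prod.mk.injEq, hsqz, hχ1, hn0]
      constructor <;> push_cast <;> ring


/-- For (γ,κ) ∈ 𝔈 and L = 𝔩(γ,κ), every mean-zero, real, second-variable-even
element of the kernel of Q(γ,κ,·) has Fourier support contained in V(γ,κ), and
this kernel is a 2-dimensional real vector space. -/
theorem kernel_of_Q (μ σ γ κ : ℝ) (hμ : 0 < μ) (hσ : 0 < σ)
    (hγ : 1 < γ) (hκ : 1 < κ)
    (h1 : 0 < κ - γ) (h2 : κ - γ ≤ 4 * μ / σ * γ * (γ ^ 2 - 1)) :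
    (∀ a ∈ KerQ μ σ γ κ (ellL μ σ γ κ).1 (ellL μ σ γ κ).2, ∀ m n : ℤ,
      ((m : ℝ) / (ellL μ σ γ κ).1, (n : ℝ) / (ellL μ σ γ κ).2) ∉ Vset μ σ γ κ →
        a (m, n) = 0) ∧
    (∃ a₁ a₂ : ℤ × ℤ → ℂ,
      a₁ ∈ KerQ μ σ γ κ (ellL μ σ γ κ).1 (ellL μ σ γ κ).2 ∧
      a₂ ∈ KerQ μ σ γ κ (ellL μ σ γ κ).1 (ellL μ σ γ κ).2 ∧
      LinearIndependent ℝ ![a₁, a₂] ∧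
      ∀ a ∈ KerQ μ σ γ κ (ellL μ σ γ κ).1 (ellL μ σ γ κ).2,
        ∃ c d : ℝ, a = c • a₁ + d • a₂) := by
  by_cases heq : κ - γ = 4 * μ / σ * γ * (γ ^ 2 - 1)
  · have hL : ellL μ σ γ κ = (1 / rho μ γ κ, 1 / rho μ γ κ) := by
      rw [ellL, if_pos heq]
    rw [hL]
    apply main_aux μ σ γ κ (1 / rho μ γ κ) (1 / rho μ γ κ) 0
    · intro m n
      rw [div_one_div', div_one_div']
      exact zeros_eq hμ hσ hγ h1 heq m n
    · intro m n
      rw [div_one_div', div_one_div']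
      exact memV_eq hμ hσ hγ h1 heq m n
  · have hL : ellL μ σ γ κ = (1 / (rho μ γ κ * chi μ σ γ κ),
        1 / (rho μ γ κ * Real.sqrt (1 - chi μ σ γ κ ^ 2))) := by
      rw [ellL, if_neg heq]
    rw [hL]
    apply main_aux μ σ γ κ _ _ 1
    · intro m n
      rw [div_one_div', div_one_div']
      exact zeros_strict hμ hσ hγ h1 h2 heq m n
    · intro m n
      rw [div_one_div', div_one_div']
      exact memV_strict hμ hσ hγ h1 h2 heq m n
end
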